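/- Let A be an n-dimensional perfect evolution algebra over a field K with n ≥ 3 and natural basis B, and let I be a maximal s-basic ideal of A relative to B, where either s = 1, or n is even, s = n/2 and A is irreducible. Then I is the unique maximal basic ideal of A: if J is a proper ideal of A that is spanned by a subset of B and no proper ideal spanned by a subset of B has dimension greater than dim J, then J = I. -/

import Mathlib

open Submodule

section EvolutionAlgebraDefs

variable {K A : Type*} [Field K] [NonUnitalNonAssocCommRing A] [Module K A]
  [SMulCommClass K A A] [IsScalarTower K A A]

/-- A *natural basis* of an evolution algebra: distinct basis vectors multiply to zero. -/
def IsNaturalBasis {ι : Type*} (b : Module.Basis ι K A) : Prop :=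
  ∀ i j : ι, i ≠ j → b i * b j = 0

/-- An *ideal* of the commutative (not necessarily associative or unital) `K`-algebra `A`:
a `K`-subspace closed under multiplication by arbitrary elements of `A`. -/
def IsEvoIdeal (I : Submodule K A) : Prop :=
  ∀ a : A, ∀ x ∈ I, a * x ∈ I

variable (K A)

/-- `A²`: the `K`-linear span of all products of elements of `A`. -/
def sqSpan : Submodule K A :=
  Submodule.span K {z : A | ∃ x y : A, z = x * y}

/-- `A` is *perfect*: `A² = A`. -/
def IsPerfectEvo : Prop := sqSpan K A = ⊤

/-- `A` is *simple*: `A² ≠ 0` and the only ideals of `A` are `0` and `A`. -/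
def IsSimpleEvo : Prop :=
  sqSpan K A ≠ ⊥ ∧ ∀ I : Submodule K A, IsEvoIdeal I → I = ⊥ ∨ I = ⊤

/-- `A` is *irreducible*: it cannot be decomposed as the direct sum of two nonzero ideals. -/
def IsIrreducibleEvo : Prop :=
  ¬ ∃ I J : Submodule K A, IsEvoIdeal I ∧ IsEvoIdeal J ∧ I ≠ ⊥ ∧ J ≠ ⊥ ∧
    I ⊓ J = ⊥ ∧ I ⊔ J = ⊤

variable {A}

/-- The smallest ideal of `A` containing `x`. -/
def idealGenerated (x : A) : Submodule K A :=
  sInf {I : Submodule K A | IsEvoIdeal I ∧ x ∈ I}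

variable {K}

/-- The structure matrix of a basis: entry `(k, i)` is the coefficient of `e k` in `(e i)²`. -/
noncomputable def structMatrix {n : ℕ} (b : Module.Basis (Fin n) K A) :
    Matrix (Fin n) (Fin n) K :=
  Matrix.of fun k i => b.repr (b i * b i) k

end EvolutionAlgebraDefs

section Aux

variable {K A : Type*} [Field K] [NonUnitalNonAssocCommRing A] [Module K A]
  [SMulCommClass K A A] [IsScalarTower K A A]

lemma IsEvoIdeal.sup {I J : Submodule K A} (hI : IsEvoIdeal I) (hJ : IsEvoIdeal J) :
    IsEvoIdeal (I ⊔ J) := by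
  intro a x hx
  obtain ⟨y, hy, z, hz, rfl⟩ := Submodule.mem_sup.mp hx
  rw [mul_add]
  exact Submodule.add_mem _ (Submodule.mem_sup_left (hI a y hy))
    (Submodule.mem_sup_right (hJ a z hz))

lemma finrank_span_basis_image {n : ℕ} (b : Module.Basis (Fin n) K A) (s : Finset (Fin n)) :
    Module.finrank K (Submodule.span K (⇑b '' ↑s)) = s.card := by
  classical
  have hli : LinearIndependent K ((↑) : (⇑b '' (↑s : Set (Fin n))) → A) :=
    LinearIndepOn.image_of_comp (s := (↑s : Set (Fin n))) ⇑b id (b.linearIndependent.linearIndepOn _)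
  have h : ⇑b '' (↑s : Set (Fin n)) = ↑(s.image b) := (Finset.coe_image).symm
  rw [h] at hli ⊢
  rw [finrank_span_finset_eq_card hli, Finset.card_image_of_injective _ b.injective]

end Aux

/-- Let `A` be an `n`-dimensional perfect evolution algebra (`n ≥ 3`) and
let `I` be a maximal `s`-basic ideal relative to the natural basis `B`, where `s = 1`, or
`n` is even, `s = n/2` and `A` is irreducible. Then `I` is the unique maximal basic ideal. -/
theorem maximal_basic_ideal_unique
    {K A : Type*} [Field K] [NonUnitalNonAssocCommRing A] [Module K A]
    [SMulCommClass K A A] [IsScalarTower K A A]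
    {n : ℕ} (hn : 3 ≤ n) (b : Module.Basis (Fin n) K A) (hb : IsNaturalBasis b)
    (hperf : IsPerfectEvo K A)
    (s : ℕ) (hs : s = 1 ∨ (Even n ∧ s = n / 2 ∧ IsIrreducibleEvo K A))
    (I : Submodule K A) (hI : IsEvoIdeal I) (hItop : I ≠ ⊤)
    (u : Finset (Fin n)) (hu : u.card = s)
    (hIspan : I = Submodule.span K (⇑b '' ↑u))
    (hImax : ∀ (J : Submodule K A) (t : Set (Fin n)),
      IsEvoIdeal J → J ≠ ⊤ → J = Submodule.span K (⇑b '' t) →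
        Module.finrank K ↥J ≤ s)
    (J : Submodule K A) (hJ : IsEvoIdeal J) (hJtop : J ≠ ⊤)
    (t : Set (Fin n)) (hJspan : J = Submodule.span K (⇑b '' t))
    (hJmax : ∀ (J' : Submodule K A) (t' : Set (Fin n)),
      IsEvoIdeal J' → J' ≠ ⊤ → J' = Submodule.span K (⇑b '' t') →
        Module.finrank K ↥J' ≤ Module.finrank K ↥J) :
    J = I := by
  classical
  have hFD : FiniteDimensional K A := b.finiteDimensional_of_finite
  have hnA : Module.finrank K A = n := by
    rw [Module.finrank_eq_card_basis b, Fintype.card_fin]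
  -- replace t by a finset
  set tf : Finset (Fin n) := t.toFinset with htf
  have htcoe : (↑tf : Set (Fin n)) = t := Set.coe_toFinset t
  have hJspan' : J = Submodule.span K (⇑b '' ↑tf) := by rw [htcoe]; exact hJspan
  -- dimensions
  have hdimI : Module.finrank K ↥I = s := by rw [hIspan, finrank_span_basis_image, hu]
  have hdimJ : Module.finrank K ↥J = s := by
    have h1 : Module.finrank K ↥J ≤ s := hImax J t hJ hJtop hJspan
    have h2 : s ≤ Module.finrank K ↥J := by
      rw [← hdimI]; exact hJmax I ↑u hI hItop hIspan
    omega
  have hcardt : tf.card = s := by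
    rw [hJspan', finrank_span_basis_image] at hdimJ; exact hdimJ
  -- suppose tf = u : done
  by_cases heq : tf = u
  · rw [hJspan', heq, ← hIspan]
  -- else card (u ∪ tf) > s
  have hspos : 0 < s := by
    rcases hs with h1 | ⟨hev, hs2, _⟩
    · omega
    · omega
  have hnotsub : ¬ tf ⊆ u := fun hsub =>
    heq (Finset.eq_of_subset_of_card_le hsub (by omega))
  have hssub : u ⊂ u ∪ tf := by
    constructor
    · exact Finset.subset_union_left
    · intro hle
      exact hnotsub fun x hx => hle (Finset.mem_union_right u hx)
  have hcardlt : s < (u ∪ tf).card := hu ▸ Finset.card_lt_card hssub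
  -- the sup ideal
  have hsupspan : I ⊔ J = Submodule.span K (⇑b '' ↑(u ∪ tf)) := by
    rw [hIspan, hJspan', Finset.coe_union, Set.image_union, Submodule.span_union]
  have hsupIdeal : IsEvoIdeal (I ⊔ J) := hI.sup hJ
  have hsuptop : I ⊔ J = ⊤ := by
    by_contra hne
    have := hImax (I ⊔ J) ↑(u ∪ tf) hsupIdeal hne hsupspan
    rw [hsupspan, finrank_span_basis_image] at this
    omega
  have hcardun : (u ∪ tf).card = n := by
    have : Module.finrank K ↥(I ⊔ J) = n := by rw [hsuptop, finrank_top, hnA]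
    rw [hsupspan, finrank_span_basis_image] at this
    exact this
  have hcardle : (u ∪ tf).card ≤ s + s := by
    calc (u ∪ tf).card ≤ u.card + tf.card := Finset.card_union_le u tf
    _ = s + s := by omega
  rcases hs with h1 | ⟨hev, hs2, hirr⟩
  · omega
  · -- s = n/2, n even; then u and tf are disjoint
    have h2s : s + s = n := by
      obtain ⟨k, hk⟩ := hev
      omega
    have hinter : (u ∩ tf).card = 0 := by
      have := Finset.card_union_add_card_inter u tf
      omega
    have hdisj : Disjoint (↑u : Set (Fin n)) ↑tf :=
      Finset.disjoint_coe.mpr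
        (Finset.disjoint_iff_inter_eq_empty.mpr (Finset.card_eq_zero.mp hinter))
    have hinf : I ⊓ J = ⊥ := by
      rw [hIspan, hJspan']
      exact disjoint_iff.mp (b.linearIndependent.disjoint_span_image hdisj)
    have hIne : I ≠ ⊥ := by
      obtain ⟨i, hi⟩ := Finset.card_pos.mp (hu ▸ hspos)
      intro hbot
      have : b i ∈ I := hIspan ▸ Submodule.subset_span ⟨i, hi, rfl⟩
      rw [hbot, Submodule.mem_bot] at this
      exact b.ne_zero i this
    have hJne : J ≠ ⊥ := by
      obtain ⟨i, hi⟩ := Finset.card_pos.mp (hcardt ▸ hspos)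
      intro hbot
      have : b i ∈ J := hJspan' ▸ Submodule.subset_span ⟨i, hi, rfl⟩
      rw [hbot, Submodule.mem_bot] at this
      exact b.ne_zero i this
    exact absurd ⟨I, J, hI, hJ, hIne, hJne, hinf, hsuptop⟩ hirr
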